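/- arXiv:math/0107128 — 3 statements merged into one kernel-verified Lean document; each statement's English description precedes it below -/
import Mathlib

section
/- For any permutation σ of {1,...,2N} that is a fixed point free involution, if the maximum length of a decreasing subsequence of the word σ(1)σ(2)...σ(2N) is L, then L is even. -/
/-- `σ` has a decreasing subsequence of length `q`: indices `t 0 < t 1 < ⋯` with
`σ (t 0) > σ (t 1) > ⋯`. -/
def HasDecSub {M : ℕ} (σ : Equiv.Perm (Fin M)) (q : ℕ) : Prop :=
  ∃ t : Fin q → Fin M, StrictMono t ∧ StrictAnti (fun a => σ (t a))

/-- From a decreasing subsequence of length `m` all of whose points lie strictly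
above the diagonal (`u a < σ (u a)`), an involution yields a decreasing
subsequence of length `2 * m` (append the reflected points). -/
lemma aux_double {M m : ℕ} (σ : Equiv.Perm (Fin M))
    (hinv : ∀ i, σ (σ i) = i)
    (u : Fin m → Fin M) (hmono : StrictMono u)
    (hanti : StrictAnti fun a => σ (u a))
    (habove : ∀ a, u a < σ (u a)) : HasDecSub σ (2 * m) := by
  refine ⟨fun a => if h : (a : ℕ) < m then u ⟨a, h⟩
      else σ (u ⟨2 * m - 1 - a, by have := a.isLt; omega⟩), ?_, ?_⟩
  · intro a b hab
    have hab' : (a : ℕ) < (b : ℕ) := hab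
    by_cases ha : (a : ℕ) < m <;> by_cases hb : (b : ℕ) < m
    · simp only [dif_pos ha, dif_pos hb]
      exact hmono (show ((⟨a, ha⟩ : Fin m) < ⟨b, hb⟩) from hab')
    · simp only [dif_pos ha, dif_neg hb]
      set c : ℕ := 2 * m - 1 - b with hc
      rcases le_or_gt (a : ℕ) c with h | h
      · calc u ⟨a, ha⟩ ≤ u ⟨c, by omega⟩ := hmono.monotone (show ((⟨a,ha⟩:Fin m) ≤ ⟨c, by omega⟩) from h)
          _ < σ (u ⟨c, by omega⟩) := habove _
      · calc u ⟨a, ha⟩ < σ (u ⟨a, ha⟩) := habove _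
          _ < σ (u ⟨c, by omega⟩) := hanti (show ((⟨c, by omega⟩:Fin m) < ⟨a, ha⟩) from h)
    · omega
    · simp only [dif_neg ha, dif_neg hb]
      exact hanti (show ((⟨2*m-1-(b:ℕ), by have := b.isLt; omega⟩:Fin m) <
        ⟨2*m-1-(a:ℕ), by have := a.isLt; omega⟩) from by
          simp only [Fin.mk_lt_mk]; omega)
  · intro a b hab
    have hab' : (a : ℕ) < (b : ℕ) := hab
    by_cases ha : (a : ℕ) < m <;> by_cases hb : (b : ℕ) < m
    · simp only [dif_pos ha, dif_pos hb]
      exact hanti (show ((⟨a, ha⟩ : Fin m) < ⟨b, hb⟩) from hab')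
    · simp only [dif_pos ha, dif_neg hb, hinv]
      set c : ℕ := 2 * m - 1 - b with hc
      rcases le_or_gt (a : ℕ) c with h | h
      · calc u ⟨c, by omega⟩ < σ (u ⟨c, by omega⟩) := habove _
          _ ≤ σ (u ⟨a, ha⟩) := hanti.antitone (show ((⟨a,ha⟩:Fin m) ≤ ⟨c, by omega⟩) from h)
      · calc u ⟨c, by omega⟩ < u ⟨a, ha⟩ := hmono (show ((⟨c, by omega⟩:Fin m) < ⟨a, ha⟩) from h)
          _ < σ (u ⟨a, ha⟩) := habove _
    · omega
    · simp only [dif_neg ha, dif_neg hb, hinv]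
      exact hmono (show ((⟨2*m-1-(b:ℕ), by have := b.isLt; omega⟩:Fin m) <
        ⟨2*m-1-(a:ℕ), by have := a.isLt; omega⟩) from by
          simp only [Fin.mk_lt_mk]; omega)

/-- For a fixed point free involution of `{1,...,2N}`, the maximum length of a
decreasing subsequence is even. -/
theorem max_dec_subseq_even (N L : ℕ) (σ : Equiv.Perm (Fin (2 * N)))
    (hinv : σ ^ 2 = 1) (hfpf : ∀ i, σ i ≠ i)
    (hL : HasDecSub σ L) (hmax : ∀ q, HasDecSub σ q → q ≤ L) :
    Even L := by
  have hinv' : ∀ i, σ (σ i) = i := by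
    intro i
    have h2 : σ * σ = 1 := by rwa [pow_two] at hinv
    calc σ (σ i) = (σ * σ) i := rfl
      _ = i := by rw [h2]; rfl
  by_contra hodd
  obtain ⟨t, ht, hta⟩ := hL
  -- the set of chain indices whose point lies above the diagonal
  set S : Finset (Fin L) := Finset.univ.filter (fun k => t k < σ (t k)) with hS
  set m : ℕ := S.card with hm
  have hmL : m ≤ L := by
    calc m ≤ (Finset.univ : Finset (Fin L)).card := Finset.card_le_card (Finset.filter_subset _ _)
      _ = L := by simp
  -- downward closedness
  have hdc : ∀ j k : Fin L, j ≤ k → t k < σ (t k) → t j < σ (t j) := by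
    intro j k hjk hk
    calc t j ≤ t k := ht.monotone hjk
      _ < σ (t k) := hk
      _ ≤ σ (t j) := hta.antitone hjk
  have hlt : ∀ k : Fin L, (k : ℕ) < m → t k < σ (t k) := by
    intro k hk
    by_contra hcon
    have hsub : S ⊆ Finset.Iio k := by
      intro j hj
      simp only [hS, Finset.mem_filter, Finset.mem_univ, true_and] at hj
      simp only [Finset.mem_Iio]
      by_contra hge
      exact hcon (hdc k j (le_of_not_gt hge) hj)
    have := Finset.card_le_card hsub
    rw [Fin.card_Iio] at this
    omega
  have hge : ∀ k : Fin L, m ≤ (k : ℕ) → σ (t k) < t k := by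
    intro k hk
    rcases lt_trichotomy (σ (t k)) (t k) with h | h | h
    · exact h
    · exact absurd h (hfpf _)
    · exfalso
      have hsub : Finset.Iic k ⊆ S := by
        intro j hj
        simp only [Finset.mem_Iic] at hj
        simp only [hS, Finset.mem_filter, Finset.mem_univ, true_and]
        exact hdc j k hj h
      have := Finset.card_le_card hsub
      rw [Fin.card_Iic] at this
      omega
  rw [Nat.not_even_iff_odd] at hodd
  obtain ⟨j, hj⟩ := hodd
  -- L odd, so either the above part or the below part has more than half the indices
  rcases le_or_gt (2 * m) L with hcase | hcase
  · -- below part has length L - m, with 2 * (L - m) > L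
    have hL0 : 0 < L := by omega
    set u : Fin (L - m) → Fin (2 * N) := fun a => σ (t ⟨L - 1 - a, by have := a.isLt; omega⟩) with hu
    have h1 : StrictMono u := by
      intro a b hab
      have hab' : (a : ℕ) < (b : ℕ) := hab
      exact hta (show ((⟨L-1-(b:ℕ), by have := b.isLt; omega⟩ : Fin L) <
        ⟨L-1-(a:ℕ), by have := a.isLt; omega⟩) from by
          simp only [Fin.mk_lt_mk]; have := a.isLt; have := b.isLt; omega)
    have h2 : StrictAnti fun a => σ (u a) := by
      intro a b hab
      have hab' : (a : ℕ) < (b : ℕ) := hab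
      simp only [hu, hinv']
      exact ht (show ((⟨L-1-(b:ℕ), by have := b.isLt; omega⟩ : Fin L) <
        ⟨L-1-(a:ℕ), by have := a.isLt; omega⟩) from by
          simp only [Fin.mk_lt_mk]; have := a.isLt; have := b.isLt; omega)
    have h3 : ∀ a, u a < σ (u a) := by
      intro a
      simp only [hu, hinv']
      exact hge ⟨L - 1 - a, by have := a.isLt; omega⟩ (by have := a.isLt; simp; omega)
    have := hmax _ (aux_double σ hinv' u h1 h2 h3)
    omega
  · -- above part: 2 * m > L
    set u : Fin m → Fin (2 * N) := fun a => t ⟨a, by have := a.isLt; omega⟩ with hu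
    have h1 : StrictMono u := by
      intro a b hab
      exact ht (show ((⟨(a:ℕ), by have := a.isLt; omega⟩ : Fin L) <
        ⟨(b:ℕ), by have := b.isLt; omega⟩) from hab)
    have h2 : StrictAnti fun a => σ (u a) := by
      intro a b hab
      exact hta (show ((⟨(a:ℕ), by have := a.isLt; omega⟩ : Fin L) <
        ⟨(b:ℕ), by have := b.isLt; omega⟩) from hab)
    have h3 : ∀ a, u a < σ (u a) := fun a => hlt _ a.isLt
    have := hmax _ (aux_double σ hinv' u h1 h2 h3)
    omega
end

section
/- Suppose a two-line array consists of N pairs (i_m, x_m) with all 2N entries distinct elements of {1,...,2N}, x_m < i_m for each m, and i_1 < i_2 < ... < i_N. If the bottom line x_1,...,x_N has a decreasing subsequence of length q, then the fixed point free involution σ of {1,...,2N} defined by σ(i_m) = x_m and σ(x_m) = i_m has a decreasing subsequence of length at least 2q. -/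
/-- If the bottom line of a two-line array (with distinct entries in `{1,...,2N}`,
`x m < i m`, top line increasing) has a decreasing subsequence of length `q`, then the
fixed point free involution `σ` defined by `σ (i m) = x m`, `σ (x m) = i m` has a
decreasing subsequence of length at least `2q`. -/
theorem two_line_array_dec_subseq (N q : ℕ)
    (i x : Fin N → Fin (2 * N))
    (hdistinct : Function.Injective (Sum.elim i x))
    (hlt : ∀ m, x m < i m)
    (htop : StrictMono i)
    (σ : Equiv.Perm (Fin (2 * N)))
    (hσ : ∀ m, σ (i m) = x m ∧ σ (x m) = i m)
    (j : Fin q → Fin N) (hj : StrictMono j)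
    (hdec : StrictAnti (fun a => x (j a))) :
    ∃ t : Fin (2 * q) → Fin (2 * N), StrictMono t ∧ StrictAnti (fun a => σ (t a)) := by
  -- key: x (j c) < i (j d) for all c d
  have key : ∀ c d : Fin q, x (j c) < i (j d) := by
    intro c d
    rcases le_or_gt d c with h | h
    · exact lt_of_le_of_lt (hdec.antitone h) (hlt (j d))
    · exact lt_of_lt_of_le (hlt (j c)) ((htop.comp hj).monotone h.le)
  refine ⟨fun a => if h : (a : ℕ) < q then x (j ⟨q - 1 - a, by omega⟩)
      else i (j ⟨(a : ℕ) - q, by have := a.isLt; omega⟩), ?_, ?_⟩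
  · intro a b hab
    by_cases ha : (a : ℕ) < q <;> by_cases hb : (b : ℕ) < q <;>
      simp only [ha, hb, dif_pos, dif_neg, not_false_iff]
    · exact hdec (show (⟨q - 1 - b, by omega⟩ : Fin q) < ⟨q - 1 - a, by omega⟩ by
        simp [Fin.lt_def]; omega)
    · exact key _ _
    · omega
    · exact htop.comp hj (show (⟨(a:ℕ) - q, by have := a.isLt; omega⟩ : Fin q) < ⟨(b:ℕ) - q, by have := b.isLt; omega⟩ by
        simp [Fin.lt_def]; omega)
  · intro a b hab
    by_cases ha : (a : ℕ) < q <;> by_cases hb : (b : ℕ) < q <;>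
      simp only [ha, hb, dif_pos, dif_neg, not_false_iff, (hσ _).1, (hσ _).2]
    · exact htop.comp hj (show (⟨q - 1 - b, by omega⟩ : Fin q) < ⟨q - 1 - a, by omega⟩ by
        simp [Fin.lt_def]; omega)
    · exact key _ _
    · omega
    · exact hdec (show (⟨(a:ℕ) - q, by have := a.isLt; omega⟩ : Fin q) < ⟨(b:ℕ) - q, by have := b.isLt; omega⟩ by
        simp [Fin.lt_def]; omega)
end

section
/- Define Z_0(l_1,...,l_p) = (1/(2π)^p) ∫_{[-π,π]^p} det[ e^{i(l_j - l⁰_k)θ_j} - e^{i(l_j + l⁰_k)θ_j} ]_{j,k} dθ where 1 ≤ l⁰_1 < ... < l⁰_p and 1 ≤ l_1 < ... < l_p are positive integers. Then Z_0(l_1,...,l_p) = 1 if l_j = l⁰_j for all j, and 0 otherwise. -/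
/-!
By the Leibniz formula every term of the determinant is a product of functions of separate
variables `θ_j`, so by Fubini the integral of the determinant is the determinant of the entrywise
integrals. Orthogonality of `e^{imθ}` on `[-π, π]` makes entry `(j, k)` equal to `2π δ_{l_j, l⁰_k}`
(the second exponential never contributes, as `l_j + l⁰_k ≥ 2`), and for strictly increasing
tuples the determinant of this `0/1` matrix is `1` if the tuples agree and `0` otherwise.
-/

open MeasureTheory Real Complex

/-- The multidimensional integral `Z_n(l_1,…,l_p)` of the paper, for fixed starting
positions `l0`. -/
noncomputable def Zint (p : ℕ) (l0 : Fin p → ℤ) (n : ℕ) (l : Fin p → ℤ) : ℂ :=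
  (1 / (2 * Real.pi) ^ p : ℂ) *
    ∫ θ in Set.Icc (fun _ : Fin p => -Real.pi) (fun _ : Fin p => Real.pi),
      (((∑ j, 2 * Real.cos (θ j)) ^ n : ℝ) : ℂ) *
        Matrix.det (Matrix.of fun j k : Fin p =>
          Complex.exp (Complex.I * ((l j - l0 k : ℤ) : ℂ) * ((θ j : ℝ) : ℂ)) -
            Complex.exp (Complex.I * ((l j + l0 k : ℤ) : ℂ) * ((θ j : ℝ) : ℂ)))

theorem integral_pi_det_eq_det_integral {ι 𝕜 E : Type*} [Fintype ι] [DecidableEq ι] [RCLike 𝕜]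
    [MeasurableSpace E] {μ : ι → Measure E} [∀ i, SigmaFinite (μ i)]
    (g : ι → ι → E → 𝕜) (hg : ∀ j k, Integrable (g j k) (μ j)) :
    ∫ x, (Matrix.of fun j k => g j k (x j)).det ∂Measure.pi μ =
      (Matrix.of fun j k => ∫ y, g j k y ∂μ j).det := by
  simp_rw [← Matrix.det_transpose (Matrix.of _), Matrix.det_apply', Matrix.transpose_apply,
    Matrix.of_apply]
  rw [integral_finsetSum _ fun σ _ => (Integrable.fintype_prod fun i => hg i (σ i)).const_mul _]
  refine Finset.sum_congr rfl fun σ _ => ?_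
  rw [integral_const_mul, integral_fintype_prod_eq_prod (fun i y => g i (σ i) y)]

theorem integrableOn_exp_mul_Icc (c : ℂ) (a b : ℝ) :
    IntegrableOn (fun x : ℝ => exp (c * x)) (Set.Icc a b) :=
  (by fun_prop : Continuous fun x : ℝ => exp (c * x)).integrableOn_Icc

theorem integral_exp_int_mul_I (m : ℤ) :
    ∫ x in Set.Icc (-π) π, exp (I * m * x) = 2 * π * if m = 0 then 1 else 0 := by
  rw [integral_Icc_eq_integral_Ioc, ← intervalIntegral.integral_of_le (by linarith [pi_pos])]
  split_ifs with hm
  · simp [hm]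
    ring
  · have hc : I * m ≠ 0 := mul_ne_zero I_ne_zero (Int.cast_ne_zero.mpr hm)
    -- the two exponents differ by `2πI m`
    have hperiod : exp (I * m * π) = exp (I * m * (-π : ℝ)) :=
      exp_eq_exp_iff_exists_int.mpr ⟨m, by push_cast; ring⟩
    rw [integral_exp_mul_complex hc, hperiod, sub_self, zero_div, mul_zero]

theorem integral_exp_int_mul_I_sub_of_ne_zero (a b : ℤ) (hb : b ≠ 0) :
    ∫ x in Set.Icc (-π) π, (exp (I * a * x) - exp (I * b * x)) =
      2 * π * if a = 0 then 1 else 0 := by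
  rw [integral_sub (integrableOn_exp_mul_Icc _ _ _) (integrableOn_exp_mul_Icc _ _ _),
    integral_exp_int_mul_I, integral_exp_int_mul_I, if_neg hb, mul_zero, sub_zero]

theorem det_ite_eq_of_strictMono {ι α R : Type*} [Fintype ι] [DecidableEq ι] [LinearOrder ι]
    [Preorder α] [DecidableEq α] [CommRing R] {l l0 : ι → α} (hl : StrictMono l)
    (hl0 : StrictMono l0) :
    (Matrix.of fun j k => if l j = l0 k then (1 : R) else 0).det = if l = l0 then 1 else 0 := by
  split_ifs with h
  · subst h
    have hone : (Matrix.of fun j k => if l j = l k then (1 : R) else 0) = 1 := by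
      ext j k
      simp [Matrix.one_apply, hl.injective.eq_iff]
    rw [hone, Matrix.det_one]
  · rw [Matrix.det_apply]
    refine Finset.sum_eq_zero fun σ _ => ?_
    -- A nonzero term would give `l ∘ σ = l0`, hence `range l = range l0`, hence `l = l0`.
    obtain ⟨i, hi⟩ : ∃ i, l (σ i) ≠ l0 i := by
      by_contra! hall
      refine h ((hl.range_inj hl0).mp ?_)
      rw [← EquivLike.range_comp l σ]
      exact congrArg Set.range (funext hall)
    rw [Finset.prod_eq_zero (Finset.mem_univ i) (by simp [hi]), smul_zero]

/-- At `n = 0`, the integral formula reproduces the initial condition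
`Z_0(l) = δ_{l, l⁰}`. -/
theorem Zint_zero_initial_condition (p : ℕ) (l0 l : Fin p → ℤ)
    (hl0 : StrictMono l0) (hl0pos : ∀ j, 1 ≤ l0 j)
    (hl : StrictMono l) (hlpos : ∀ j, 1 ≤ l j) :
    Zint p l0 0 l = if l = l0 then 1 else 0 := by
  have hentry : ∀ j k, ∫ x in Set.Icc (-π) π,
      (exp (I * ((l j - l0 k : ℤ) : ℂ) * x) - exp (I * ((l j + l0 k : ℤ) : ℂ) * x)) =
        2 * π * if l j = l0 k then 1 else 0 := fun j k => by
    rw [integral_exp_int_mul_I_sub_of_ne_zero _ _ (by linarith [hlpos j, hl0pos k])]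
    simp only [sub_eq_zero]
  have hscale : (Matrix.of fun j k => 2 * (π : ℂ) * if l j = l0 k then 1 else 0) =
      (2 * π : ℂ) • Matrix.of fun j k => if l j = l0 k then 1 else 0 := rfl
  rw [Zint, ← Set.pi_univ_Icc, volume_pi, Measure.restrict_pi_pi]
  simp only [pow_zero, ofReal_one, one_mul]
  rw [integral_pi_det_eq_det_integral
    (fun j k (x : ℝ) => exp (I * ((l j - l0 k : ℤ) : ℂ) * x) - exp (I * ((l j + l0 k : ℤ) : ℂ) * x))
    fun j k => (integrableOn_exp_mul_Icc _ _ _).sub (integrableOn_exp_mul_Icc _ _ _)]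
  simp_rw [hentry]
  rw [hscale, Matrix.det_smul, det_ite_eq_of_strictMono hl hl0, Fintype.card_fin]
  have h2pi : (2 * π : ℂ) ^ p ≠ 0 := pow_ne_zero _ (by simp [pi_ne_zero])
  field_simp
end
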